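/- Let n ≥ 5 be an integer. There exist a constant C > 0 and ℓ₀ ≥ 1 such that for every real ℓ ≥ ℓ₀, | V(ℓ) − √(π/(nℓ)) | ≤ C·ℓ^{−3/2}. In particular, ℓ^{1/2} · V(ℓ) → √(π/n) as ℓ → ∞. -/

import Mathlib

/-!
With `a = nℓ` and `m = (n - 2)/2`, `V(ℓ) = ∫_{-1}^{1} e^{-a s²} (1 - s²)^m ds`. Bernoulli's
inequality gives `0 ≤ 1 - (1 - s²)^m ≤ m s²`, and `m s² e^{-a s²} ≤ (2m/a) e^{-a s²/2}`, so
dropping the factor `(1 - s²)^m` costs at most `(2m/a) √(2π/a) = O(ℓ^{-3/2})`. The truncated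
Gaussian integral `∫_{-1}^{1} e^{-a s²}` misses `√(π/a)` only by a tail of size `√π e^{1-a}`.
Multiplying the resulting `O(ℓ^{-3/2})` estimate by `ℓ^{1/2}` gives the limit.
-/

open Real Filter

/-- Volume integral `V(ℓ)` of `g_ℓ = e^{−2ℓs²} g_{S^n}` (up to the factor `ω_{n−1}`). -/
noncomputable def V (n : ℕ) (ℓ : ℝ) : ℝ :=
  ∫ s in (-1 : ℝ)..1,
    Real.exp (-(n : ℝ) * ℓ * s ^ 2) * (1 - s ^ 2) ^ (((n : ℝ) - 2) / 2)

open MeasureTheory Set intervalIntegral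

lemma mul_exp_neg_le_two_mul_exp_neg_half (x : ℝ) : x * exp (-x) ≤ 2 * exp (-x / 2) := by
  have hx : x * exp (-(x / 2)) ≤ 2 := by
    rw [exp_neg, ← div_eq_mul_inv, div_le_iff₀ (exp_pos _)]
    linarith [add_one_le_exp (x / 2), exp_pos (x / 2)]
  calc x * exp (-x) = x * exp (-(x / 2)) * exp (-x / 2) := by
        rw [mul_assoc, ← exp_add]; ring_nf
    _ ≤ 2 * exp (-x / 2) := mul_le_mul_of_nonneg_right hx (exp_pos _).le

section Gaussian

variable {a m : ℝ}

lemma intervalIntegral_exp_neg_mul_sq_le (ha : 0 < a) {x y : ℝ} (hxy : x ≤ y) :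
    ∫ s in x..y, exp (-a * s ^ 2) ≤ √(π / a) := by
  rw [integral_of_le hxy, ← integral_gaussian]
  exact setIntegral_le_integral (integrable_exp_neg_mul_sq ha) (.of_forall fun _ => (exp_pos _).le)

lemma abs_exp_neg_mul_sq_sub_mul_rpow_le (ha : 0 < a) (hm : 1 ≤ m) {s : ℝ} (hs : s ^ 2 ≤ 1) :
    |exp (-a * s ^ 2) - exp (-a * s ^ 2) * (1 - s ^ 2) ^ m| ≤
      2 * m / a * exp (-(a / 2) * s ^ 2) := by
  have hbern : 1 - m * s ^ 2 ≤ (1 - s ^ 2) ^ m := by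
    simpa [sub_eq_add_neg] using one_add_mul_self_le_rpow_one_add (by linarith : -1 ≤ -s ^ 2) hm
  have hle_one : (1 - s ^ 2) ^ m ≤ 1 := rpow_le_one (by linarith) (by nlinarith) (by linarith)
  rw [← mul_one_sub, abs_of_nonneg (mul_nonneg (exp_pos _).le (by linarith))]
  calc exp (-a * s ^ 2) * (1 - (1 - s ^ 2) ^ m)
      ≤ exp (-a * s ^ 2) * (m * s ^ 2) := by gcongr; linarith
    _ = m / a * (a * s ^ 2 * exp (-(a * s ^ 2))) := by field_simp
    _ ≤ m / a * (2 * exp (-(a * s ^ 2) / 2)) := by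
        gcongr ?_ * ?_; exact mul_exp_neg_le_two_mul_exp_neg_half _
    _ = 2 * m / a * exp (-(a / 2) * s ^ 2) := by ring_nf

lemma abs_integral_exp_neg_mul_sq_mul_rpow_sub_le (ha : 0 < a) (hm : 1 ≤ m) :
    |(∫ s in (-1 : ℝ)..1, exp (-a * s ^ 2) * (1 - s ^ 2) ^ m) -
        ∫ s in (-1 : ℝ)..1, exp (-a * s ^ 2)|
      ≤ 2 * m / a * √(π / (a / 2)) := by
  have hcont : Continuous fun s : ℝ => exp (-a * s ^ 2) * (1 - s ^ 2) ^ m := by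
    fun_prop (disch := linarith)
  rw [abs_sub_comm, ← Real.norm_eq_abs,
    ← integral_sub (integrable_exp_neg_mul_sq ha).intervalIntegrable (hcont.intervalIntegrable _ _)]
  calc ‖∫ s in (-1 : ℝ)..1, (exp (-a * s ^ 2) - exp (-a * s ^ 2) * (1 - s ^ 2) ^ m)‖
      ≤ ∫ s in (-1 : ℝ)..1, 2 * m / a * exp (-(a / 2) * s ^ 2) := by
        refine norm_integral_le_of_norm_le (by norm_num : (-1 : ℝ) ≤ 1) (.of_forall fun s hs => ?_)
          (((integrable_exp_neg_mul_sq (half_pos ha)).const_mul _).intervalIntegrable)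
        exact abs_exp_neg_mul_sq_sub_mul_rpow_le ha hm (by nlinarith [hs.1, hs.2])
    _ ≤ 2 * m / a * √(π / (a / 2)) := by
        rw [intervalIntegral.integral_const_mul]
        gcongr
        exact intervalIntegral_exp_neg_mul_sq_le (half_pos ha) (by norm_num)

lemma abs_sqrt_pi_div_sub_integral_exp_neg_mul_sq_le (ha : 1 ≤ a) :
    |√(π / a) - ∫ s in (-1 : ℝ)..1, exp (-a * s ^ 2)| ≤ √π * exp (1 - a) := by
  have hint := integrable_exp_neg_mul_sq (by linarith : 0 < a)
  have hdom := (integrable_exp_neg_mul_sq one_pos).const_mul (exp (1 - a))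
  have htail : √(π / a) - ∫ s in (-1 : ℝ)..1, exp (-a * s ^ 2) =
      ∫ s in (Ioc (-1 : ℝ) 1)ᶜ, exp (-a * s ^ 2) := by
    rw [integral_of_le (by norm_num), ← integral_gaussian,
      ← integral_add_compl measurableSet_Ioc hint, add_sub_cancel_left]
  rw [htail, abs_of_nonneg (setIntegral_nonneg measurableSet_Ioc.compl fun _ _ => (exp_pos _).le)]
  calc ∫ s in (Ioc (-1 : ℝ) 1)ᶜ, exp (-a * s ^ 2)
      ≤ ∫ s in (Ioc (-1 : ℝ) 1)ᶜ, exp (1 - a) * exp (-1 * s ^ 2) := by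
        refine setIntegral_mono_on hint.integrableOn hdom.integrableOn measurableSet_Ioc.compl
          fun s hs => ?_
        have hs2 : 1 ≤ s ^ 2 := by
          simp only [mem_compl_iff, mem_Ioc, not_and_or, not_lt, not_le] at hs
          rcases hs with hs | hs <;> nlinarith
        -- `-a s² ≤ (1 - a) - s²` is `(a - 1)(s² - 1) ≥ 0`
        rw [← exp_add]
        gcongr
        nlinarith
    _ ≤ ∫ s, exp (1 - a) * exp (-1 * s ^ 2) :=
        setIntegral_le_integral hdom (.of_forall fun _ => by positivity)
    _ = √π * exp (1 - a) := by
        rw [MeasureTheory.integral_const_mul, integral_gaussian, div_one, mul_comm]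

end Gaussian

lemma rpow_neg_three_halves {x : ℝ} (hx : 0 < x) : x ^ (-(3 : ℝ) / 2) = x⁻¹ * (√x)⁻¹ := by
  rw [show -(3 : ℝ) / 2 = -1 + -(1 / 2) by norm_num, rpow_add hx, rpow_neg_one, rpow_neg hx.le,
    sqrt_eq_rpow]

lemma mul_sqrt_le_exp_two_mul {x : ℝ} (hx : 1 ≤ x) : x * √x ≤ exp (2 * x) := by
  have hexp : x ≤ exp x := by linarith [add_one_le_exp x]
  calc x * √x ≤ exp x * exp x := by
        gcongr
        exact (sqrt_le_self_iff.2 (Or.inr hx)).trans hexp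
    _ = exp (2 * x) := by rw [← exp_add, two_mul]

lemma abs_V_sub_sqrt_pi_div_le {n : ℕ} (hn : 4 ≤ n) {ℓ : ℝ} (hℓ : 1 ≤ n * ℓ) :
    |V n ℓ - √(π / (n * ℓ))| ≤
      (n - 2) / (n * ℓ) * √(π / (n * ℓ / 2)) + √π * exp (1 - n * ℓ) := by
  set a := (n : ℝ) * ℓ
  set f := fun s : ℝ => exp (-a * s ^ 2) * (1 - s ^ 2) ^ (((n : ℝ) - 2) / 2)
  have hV : V n ℓ = ∫ s in (-1 : ℝ)..1, f s := by simp only [V, f, a, neg_mul]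
  have hm : (1 : ℝ) ≤ ((n : ℝ) - 2) / 2 := by
    have hn' : (4 : ℝ) ≤ n := by exact_mod_cast hn
    rw [le_div_iff₀ two_pos]; linarith
  have hfg := abs_integral_exp_neg_mul_sq_mul_rpow_sub_le (by linarith : 0 < a) hm
  rw [mul_div_cancel₀ _ two_ne_zero] at hfg
  calc |V n ℓ - √(π / a)|
      ≤ |(∫ s in (-1 : ℝ)..1, f s) - ∫ s in (-1 : ℝ)..1, exp (-a * s ^ 2)| +
          |√(π / a) - ∫ s in (-1 : ℝ)..1, exp (-a * s ^ 2)| := by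
        rw [hV, abs_sub_comm (√(π / a))]; exact abs_sub_le _ _ _
    _ ≤ _ := add_le_add hfg (abs_sqrt_pi_div_sub_integral_exp_neg_mul_sq_le hℓ)

lemma abs_V_sub_sqrt_pi_div_le_rpow {n : ℕ} (hn : 4 ≤ n) {ℓ : ℝ} (hℓ : 1 ≤ ℓ) :
    |V n ℓ - √(π / (n * ℓ))| ≤ (√(2 * π) + √π * exp 1) * ℓ ^ (-(3 : ℝ) / 2) := by
  have hn' : (4 : ℝ) ≤ n := by exact_mod_cast hn
  have hℓ0 : 0 < ℓ := by linarith
  have hℓa : 4 * ℓ ≤ n * ℓ := mul_le_mul_of_nonneg_right hn' hℓ0.le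
  have hmain : (n - 2) / (n * ℓ) * √(π / (n * ℓ / 2)) ≤ √(2 * π) * ℓ ^ (-(3 : ℝ) / 2) := by
    have h1 : (n - 2) / (n * ℓ) ≤ ℓ⁻¹ := by
      rw [div_le_iff₀ (by positivity), inv_mul_eq_div, mul_div_assoc, div_self hℓ0.ne']
      linarith
    have h2 : √(π / (n * ℓ / 2)) ≤ √(2 * π / ℓ) := by
      rw [div_div_eq_mul_div, mul_comm π]; gcongr; linarith
    calc _ ≤ ℓ⁻¹ * √(2 * π / ℓ) := mul_le_mul h1 h2 (sqrt_nonneg _) (by positivity)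
      _ = _ := by rw [rpow_neg_three_halves hℓ0, sqrt_div' _ hℓ0.le]; ring
  have htail : √π * exp (1 - n * ℓ) ≤ √π * exp 1 * ℓ ^ (-(3 : ℝ) / 2) := by
    have hpow : ℓ * √ℓ ≤ exp (n * ℓ) :=
      (mul_sqrt_le_exp_two_mul hℓ).trans (exp_le_exp.2 (by linarith))
    rw [rpow_neg_three_halves hℓ0, exp_sub, mul_assoc, ← mul_inv, div_eq_mul_inv]
    gcongr
  calc _ ≤ _ := abs_V_sub_sqrt_pi_div_le hn (by linarith)
    _ ≤ √(2 * π) * ℓ ^ (-(3 : ℝ) / 2) + √π * exp 1 * ℓ ^ (-(3 : ℝ) / 2) := add_le_add hmain htail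
    _ = _ := by ring

lemma tendsto_rpow_half_mul_of_abs_sub_sqrt_div_le {f : ℝ → ℝ} {c C : ℝ}
    (h : ∀ᶠ ℓ in atTop, |f ℓ - √(c / ℓ)| ≤ C * ℓ ^ (-(3 : ℝ) / 2)) :
    Tendsto (fun ℓ => ℓ ^ ((1 : ℝ) / 2) * f ℓ) atTop (nhds √c) := by
  suffices Tendsto (fun ℓ => ℓ ^ ((1 : ℝ) / 2) * f ℓ - √c) atTop (nhds 0) by
    simpa using this.add_const √c
  refine squeeze_zero_norm' ?_ (by simpa using tendsto_inv_atTop_zero.const_mul C)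
  filter_upwards [h, eventually_gt_atTop 0] with ℓ hf hℓ
  have hsqrt : ℓ ^ ((1 : ℝ) / 2) * √(c / ℓ) = √c := by
    rw [← sqrt_eq_rpow, sqrt_div' _ hℓ.le, mul_div_cancel₀ _ (sqrt_pos.2 hℓ).ne']
  have hpow : ℓ ^ ((1 : ℝ) / 2) * ℓ ^ (-(3 : ℝ) / 2) = ℓ⁻¹ := by
    rw [← rpow_add hℓ]; norm_num [rpow_neg_one]
  rw [← hsqrt, ← mul_sub, norm_mul, norm_of_nonneg (rpow_nonneg hℓ.le _), Real.norm_eq_abs]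
  calc ℓ ^ ((1 : ℝ) / 2) * |f ℓ - √(c / ℓ)| ≤ ℓ ^ ((1 : ℝ) / 2) * (C * ℓ ^ (-(3 : ℝ) / 2)) := by
        gcongr
    _ = C * ℓ⁻¹ := by rw [mul_left_comm, hpow]

/-- For `n ≥ 5`, there are `C > 0` and `ℓ₀ ≥ 1` such that for all `ℓ ≥ ℓ₀`,
`|V(ℓ) − √(π/(nℓ))| ≤ C ℓ^{−3/2}`; in particular `ℓ^{1/2} V(ℓ) → √(π/n)` as `ℓ → ∞`. -/
theorem stmt12 (n : ℕ) (hn : 5 ≤ n) :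
    (∃ C > (0 : ℝ), ∃ ℓ₀ ≥ (1 : ℝ), ∀ ℓ ≥ ℓ₀,
        |V n ℓ - Real.sqrt (π / ((n : ℝ) * ℓ))| ≤ C * ℓ ^ (-(3 : ℝ) / 2)) ∧
      Tendsto (fun ℓ : ℝ => ℓ ^ ((1 : ℝ) / 2) * V n ℓ) atTop
        (nhds (Real.sqrt (π / (n : ℝ)))) := by
  have hV : ∀ ℓ ≥ (1 : ℝ),
      |V n ℓ - √(π / (n * ℓ))| ≤ (√(2 * π) + √π * exp 1) * ℓ ^ (-(3 : ℝ) / 2) :=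
    fun ℓ hℓ => abs_V_sub_sqrt_pi_div_le_rpow (by omega) hℓ
  refine ⟨⟨_, by positivity, 1, le_rfl, hV⟩, tendsto_rpow_half_mul_of_abs_sub_sqrt_div_le
    (C := √(2 * π) + √π * exp 1) ?_⟩
  exact (eventually_ge_atTop 1).mono fun ℓ hℓ => by simpa only [div_div] using hV ℓ hℓ
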